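/- arXiv:1906.11547 — 3 statements merged into one kernel-verified Lean document; each statement's English description precedes it below -/
import Mathlib

section
/- Let n, k, N be positive integers with N = n + k, and let a_0 ≤ a_1 ≤ … ≤ a_N and d_1 ≤ … ≤ d_k be positive integers. Assume a_0 = a_1 = … = a_n = 1, assume d_{k-j} > a_{N-j} for all 0 ≤ j ≤ k-1, and assume ∑_{i=0}^N a_i − ∑_{j=1}^k d_j ≥ 1. Then k ≤ n. -/
/-- Arithmetic core of the codimension bound for smooth well formed Fano
weighted complete intersections: if the first `n+1` weights are `1`,
the "no linear cone" inequalities `d_{k-j} > a_{N-j}` hold, and the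
Fano index `∑ a_i - ∑ d_j` is at least `1`, then `k ≤ n`. -/
theorem stmt0 (n k N : ℕ) (hn : 0 < n) (hk : 0 < k) (hN : N = n + k)
    (a d : ℕ → ℕ)
    (ha_pos : ∀ i ≤ N, 0 < a i)
    (ha_mono : ∀ i j, i ≤ j → j ≤ N → a i ≤ a j)
    (hd_pos : ∀ j, 1 ≤ j → j ≤ k → 0 < d j)
    (hd_mono : ∀ i j, 1 ≤ i → i ≤ j → j ≤ k → d i ≤ d j)
    (ha_one : ∀ i ≤ n, a i = 1)
    (hcone : ∀ j < k, a (N - j) < d (k - j))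
    (hindex : (1 : ℤ) ≤ (∑ i ∈ Finset.range (N + 1), (a i : ℤ))
      - ∑ j ∈ Finset.Icc 1 k, (d j : ℤ)) :
    k ≤ n := by
  -- split the sum of weights
  have hsplit : ∑ i ∈ Finset.range (N + 1), (a i : ℤ)
      = ∑ i ∈ Finset.range (n + 1), (a i : ℤ)
        + ∑ i ∈ Finset.Ico (n + 1) (N + 1), (a i : ℤ) := by
    rw [Finset.range_eq_Ico, ← Finset.sum_Ico_consecutive _ (by omega : 0 ≤ n + 1)
      (by omega : n + 1 ≤ N + 1)]
    rw [Finset.range_eq_Ico]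
  have hones : ∑ i ∈ Finset.range (n + 1), (a i : ℤ) = (n + 1 : ℤ) := by
    rw [Finset.sum_congr rfl (fun i hi => by
      rw [ha_one i (by simpa using Nat.lt_succ_iff.mp (Finset.mem_range.mp hi))]),
      Finset.sum_const, Finset.card_range]
    push_cast; ring
  -- rewrite the degree sum as a sum over the top weights' indices
  have hdsum : ∑ j ∈ Finset.Icc 1 k, (d j : ℤ)
      = ∑ i ∈ Finset.Ico (n + 1) (N + 1), (d (i - n) : ℤ) := by
    rw [← Finset.Ico_add_one_right_eq_Icc, Finset.sum_Ico_eq_sum_range, Finset.sum_Ico_eq_sum_range]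
    have h1 : k + 1 - 1 = k := by omega
    have h2 : N + 1 - (n + 1) = k := by omega
    rw [h1, h2]
    exact Finset.sum_congr rfl (fun m _ => by
      have e : n + 1 + m - n = 1 + m := by omega
      rw [e])
  -- the cone inequalities give the key bound
  have hkey : ∑ i ∈ Finset.Ico (n + 1) (N + 1), ((a i : ℤ) + 1)
      ≤ ∑ i ∈ Finset.Ico (n + 1) (N + 1), (d (i - n) : ℤ) := by
    apply Finset.sum_le_sum
    intro i hi
    obtain ⟨h1, h2⟩ := Finset.mem_Ico.mp hi
    have hj : N - i < k := by omega
    have := hcone (N - i) hj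
    have e1 : N - (N - i) = i := by omega
    have e2 : k - (N - i) = i - n := by omega
    rw [e1, e2] at this
    exact_mod_cast this
  have hcard : (Finset.Ico (n + 1) (N + 1)).card = k := by
    rw [Nat.card_Ico]; omega
  rw [Finset.sum_add_distrib, Finset.sum_const, hcard] at hkey
  rw [hsplit, hones, hdsum] at hindex
  simp only [nsmul_eq_mul, mul_one] at hkey
  omega
end

section
/- Let n ≥ 1 and N = 2n, and let a_0 ≤ … ≤ a_N and d_1 ≤ … ≤ d_n be positive integers with a_0 = … = a_n = 1. Assume d_{n-j} > a_{N-j} for all 0 ≤ j ≤ n-1, assume d_n ≥ 2·a_N, and assume ∑_{i=0}^N a_i − ∑_{j=1}^n d_j ≥ 1. Then a_i = 1 for all 0 ≤ i ≤ N and d_j = 2 for all 1 ≤ j ≤ n. -/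
/-- Lemma 3.7 (case `k = n`): a Fano weighted complete intersection of
dimension `n` and codimension `n` must be an intersection of `n` quadrics
in ordinary projective space `P^{2n}`. -/
theorem stmt1 (n N : ℕ) (hn : 1 ≤ n) (hN : N = 2 * n)
    (a d : ℕ → ℕ)
    (ha_pos : ∀ i ≤ N, 0 < a i)
    (ha_mono : ∀ i j, i ≤ j → j ≤ N → a i ≤ a j)
    (hd_pos : ∀ j, 1 ≤ j → j ≤ n → 0 < d j)
    (hd_mono : ∀ i j, 1 ≤ i → i ≤ j → j ≤ n → d i ≤ d j)
    (ha_one : ∀ i ≤ n, a i = 1)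
    (hcone : ∀ j < n, a (N - j) < d (n - j))
    (hlast : 2 * a N ≤ d n)
    (hindex : (1 : ℤ) ≤ (∑ i ∈ Finset.range (N + 1), (a i : ℤ))
      - ∑ j ∈ Finset.Icc 1 n, (d j : ℤ)) :
    (∀ i ≤ N, a i = 1) ∧ (∀ j, 1 ≤ j → j ≤ n → d j = 2) := by
  subst hN
  -- key pointwise inequality: a (n + j) + 1 ≤ d j for 1 ≤ j ≤ n
  have hkey : ∀ j ∈ Finset.Icc 1 n, ((a (n + j) : ℤ) + 1) ≤ (d j : ℤ) := by
    intro j hj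
    rw [Finset.mem_Icc] at hj
    have h := hcone (n - j) (by omega)
    have h1 : 2 * n - (n - j) = n + j := by omega
    have h2 : n - (n - j) = j := by omega
    rw [h1, h2] at h
    exact_mod_cast h
  -- split the big sum
  have hsplit : ∑ i ∈ Finset.range (2 * n + 1), (a i : ℤ)
      = (∑ i ∈ Finset.range (n + 1), (a i : ℤ))
        + ∑ j ∈ Finset.Icc 1 n, (a (n + j) : ℤ) := by
    rw [Finset.range_eq_Ico, ← Finset.sum_Ico_consecutive _ (Nat.zero_le (n + 1)) (by omega)]
    congr 1
    · rw [Finset.range_eq_Ico]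
    rw [Finset.sum_Ico_eq_sum_range]
    have : Finset.Icc 1 n = Finset.Ico 1 (n + 1) := rfl
    rw [this, Finset.sum_Ico_eq_sum_range]
    apply Finset.sum_congr (by congr 1 <;> omega)
    intro i hi
    congr 2
    omega
  have hones : ∑ i ∈ Finset.range (n + 1), (a i : ℤ) = (n : ℤ) + 1 := by
    have : ∀ i ∈ Finset.range (n + 1), (a i : ℤ) = 1 := by
      intro i hi
      rw [Finset.mem_range] at hi
      rw [ha_one i (by omega)]
      norm_num
    rw [Finset.sum_congr rfl this]
    simp
  have hle : ∑ j ∈ Finset.Icc 1 n, ((a (n + j) : ℤ) + 1)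
      ≤ ∑ j ∈ Finset.Icc 1 n, (d j : ℤ) := Finset.sum_le_sum hkey
  have hsum1 : ∑ j ∈ Finset.Icc 1 n, ((a (n + j) : ℤ) + 1)
      = (∑ j ∈ Finset.Icc 1 n, (a (n + j) : ℤ)) + n := by
    rw [Finset.sum_add_distrib]
    simp [Nat.card_Icc]
  have heq : ∑ j ∈ Finset.Icc 1 n, ((a (n + j) : ℤ) + 1)
      = ∑ j ∈ Finset.Icc 1 n, (d j : ℤ) := by
    rw [hsplit, hones] at hindex
    push_cast at hindex hsum1 ⊢
    linarith
  have hpt : ∀ j ∈ Finset.Icc 1 n, ((a (n + j) : ℤ) + 1) = (d j : ℤ) :=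
    (Finset.sum_eq_sum_iff_of_le hkey).mp heq
  -- d n = a (2n) + 1
  have hdn : (a (2 * n) : ℤ) + 1 = (d n : ℤ) := by
    have := hpt n (by rw [Finset.mem_Icc]; omega)
    rwa [show n + n = 2 * n by ring] at this
  have haN : a (2 * n) = 1 := by
    have h1 : 0 < a (2 * n) := ha_pos _ (le_refl _)
    have h2 : 2 * a (2 * n) ≤ d n := hlast
    have : (d n : ℤ) = (a (2 * n) : ℤ) + 1 := hdn.symm
    omega
  constructor
  · intro i hi
    have h1 : 0 < a i := ha_pos i hi
    have h2 : a i ≤ a (2 * n) := ha_mono i (2 * n) hi (le_refl _)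
    omega
  · intro j hj1 hj2
    have := hpt j (Finset.mem_Icc.mpr ⟨hj1, hj2⟩)
    have ha : a (n + j) = 1 := by
      have h1 : 0 < a (n + j) := ha_pos _ (by omega)
      have h2 : a (n + j) ≤ a (2 * n) := ha_mono _ _ (by omega) (le_refl _)
      omega
    rw [ha] at this
    exact_mod_cast this.symm
end

section
/- Let n ≥ 3, k = n−1, N = 2n−1, and let a_0 ≤ … ≤ a_N and d_1 ≤ … ≤ d_k be positive integers with a_0 = … = a_{n-1} = 1 and a_N ≥ 2. Assume: (1) d_{k-j} > a_{N-j} for all 0 ≤ j ≤ k−1; (2) d_k ≥ 2·a_N; (3) ∑_{i=0}^N a_i − ∑_{j=1}^k d_j ≥ 1; (4) for every integer δ > 1 and every set I of indices with gcd{a_i : i ∈ I} divisible by δ, there are at least |I| degrees among d_1,…,d_k divisible by δ; (5) no d_j equals any a_i. Then a contradiction follows (i.e., no such data exist). -/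
/-- Second half of the proof of Lemma 3.9, ruling out the case `a_N > 1`:
no such weights and degrees exist. Condition (4) is the smoothness criterion,
condition (5) says the variety is not an intersection with a linear cone. -/
theorem stmt4 (n k N : ℕ) (hn : 3 ≤ n) (hk : k = n - 1) (hN : N = 2 * n - 1)
    (a d : ℕ → ℕ)
    (ha_pos : ∀ i ≤ N, 0 < a i)
    (ha_mono : ∀ i j, i ≤ j → j ≤ N → a i ≤ a j)
    (hd_pos : ∀ j, 1 ≤ j → j ≤ k → 0 < d j)
    (hd_mono : ∀ i j, 1 ≤ i → i ≤ j → j ≤ k → d i ≤ d j)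
    (ha_one : ∀ i ≤ n - 1, a i = 1)
    (haN : 2 ≤ a N)
    (hcone : ∀ j < k, a (N - j) < d (k - j))
    (hlast : 2 * a N ≤ d k)
    (hindex : (1 : ℤ) ≤ (∑ i ∈ Finset.range (N + 1), (a i : ℤ))
      - ∑ j ∈ Finset.Icc 1 k, (d j : ℤ))
    (hsmooth : ∀ δ : ℕ, 1 < δ → ∀ I : Finset ℕ, I ⊆ Finset.range (N + 1) →
      (∀ i ∈ I, δ ∣ a i) →
      I.card ≤ ((Finset.Icc 1 k).filter (fun j => δ ∣ d j)).card)
    (hnocone : ∀ j, 1 ≤ j → j ≤ k → ∀ i ≤ N, d j ≠ a i) :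
    False := by
  obtain ⟨p, rfl⟩ : ∃ p, n = p + 3 := ⟨n - 3, by omega⟩
  have hk2 : k = p + 2 := by omega
  have hN2 : N = 2 * p + 5 := by omega
  subst hk2; subst hN2
  -- reindexed "no cone" condition
  have hcone' : ∀ j, 1 ≤ j → j ≤ p + 2 → a (p + 3 + j) < d j := by
    intro j h1 h2
    have h := hcone (p + 2 - j) (by omega)
    rwa [show 2*p+5 - (p+2-j) = p+3+j by omega, show p+2 - (p+2-j) = j by omega] at h
  -- decompose the weight sum
  have hA : ∑ i ∈ Finset.range (2*p+5+1), (a i : ℤ)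
      = ((p:ℤ)+3) + ∑ i ∈ Finset.Icc (p+3) (2*p+5), (a i : ℤ) := by
    rw [Finset.range_eq_Ico,
      ← Finset.sum_Ico_consecutive _ (by omega : 0 ≤ p+3) (by omega : p+3 ≤ 2*p+5+1)]
    congr 1
    · have h1 : ∀ i ∈ Finset.Ico 0 (p+3), (a i : ℤ) = 1 := by
        intro i hi
        simp only [Finset.mem_Ico] at hi
        simp [ha_one i (by omega)]
      rw [Finset.sum_congr rfl h1, Finset.sum_const, Nat.card_Ico]
      simp
  have hA2 : ∑ i ∈ Finset.Icc (p+3) (2*p+5), (a i : ℤ)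
      = (∑ i ∈ Finset.range (p+2), (a (p+4+i) : ℤ)) + (a (p+3) : ℤ) := by
    rw [← Finset.Ico_add_one_right_eq_Icc, Finset.sum_Ico_eq_sum_range,
      show 2*p+5+1 - (p+3) = p+2+1 by omega, Finset.sum_range_succ']
    congr 1
    · exact Finset.sum_congr rfl (fun i _ => by rw [show p+3+(i+1) = p+4+i by omega])
  have hA3 : ∑ i ∈ Finset.range (p+2), (a (p+4+i) : ℤ)
      = ∑ i ∈ Finset.range (p+1), (a (p+4+i) : ℤ) + (a (2*p+5) : ℤ) := by
    rw [Finset.sum_range_succ, show p+4+(p+1) = 2*p+5 by omega]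
  -- decompose the degree sum
  have hD : ∑ j ∈ Finset.Icc 1 (p+2), (d j : ℤ)
      = ∑ j ∈ Finset.range (p+1), (d (1+j) : ℤ) + (d (p+2) : ℤ) := by
    rw [← Finset.Ico_add_one_right_eq_Icc, Finset.sum_Ico_eq_sum_range,
      show p+2+1-1 = p+1+1 by omega, Finset.sum_range_succ,
      show 1+(p+1) = p+2 by omega]
  have hdk : (2*(a (2*p+5)):ℤ) ≤ (d (p+2) : ℤ) := by exact_mod_cast hlast
  -- pairwise bound d_j ≥ a_{n+j}+1
  have hpair : ∀ j ∈ Finset.range (p+1), (a (p+4+j) : ℤ) + 1 ≤ (d (1+j) : ℤ) := by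
    intro j hj
    simp only [Finset.mem_range] at hj
    have h := hcone' (1+j) (by omega) (by omega)
    rw [show p+3+(1+j) = p+4+j by omega] at h
    push_cast
    omega
  have hsum1 : ∑ i ∈ Finset.range (p+1), (a (p+4+i) : ℤ) + ((p:ℤ)+1)
      ≤ ∑ j ∈ Finset.range (p+1), (d (1+j) : ℤ) := by
    have h := Finset.sum_le_sum hpair
    rw [Finset.sum_add_distrib, Finset.sum_const, Finset.card_range, nsmul_eq_mul] at h
    push_cast at h ⊢
    linarith
  -- key inequality: a_N ≤ a_n + 1
  have key1 : (a (2*p+5) : ℤ) ≤ (a (p+3) : ℤ) + 1 := by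
    linarith [hindex, hA, hA2, hA3, hD, hsum1, hdk]
  have hmono := ha_mono (p+3) (2*p+5) (by omega) (by omega)
  rcases eq_or_lt_of_le hmono with heq | hlt
  · -- case a_n = a_N
    have hall : ∀ i ∈ Finset.Icc (p+3) (2*p+5), a (2*p+5) ∣ a i := by
      intro i hi
      simp only [Finset.mem_Icc] at hi
      have h1 := ha_mono (p+3) i hi.1 (by omega)
      have h2 := ha_mono i (2*p+5) hi.2 (by omega)
      have h3 : a i = a (2*p+5) := by omega
      rw [h3]
    have hcard := hsmooth (a (2*p+5)) (by omega) (Finset.Icc (p+3) (2*p+5))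
      (by intro i hi; simp only [Finset.mem_Icc] at hi; simp only [Finset.mem_range]; omega)
      hall
    have h1 : (Finset.Icc (p+3) (2*p+5)).card = p+3 := by rw [Nat.card_Icc]; omega
    have h2 := Finset.card_filter_le (Finset.Icc 1 (p+2)) (fun j => a (2*p+5) ∣ d j)
    rw [Nat.card_Icc] at h2
    omega
  · -- case a_N = a_n + 1
    have hsucc : a (2*p+5) = a (p+3) + 1 := by
      have h : a (2*p+5) ≤ a (p+3) + 1 := by exact_mod_cast key1
      omega
    have hd_ge : ∀ j, 1 ≤ j → j ≤ p+1 → a (2*p+5) + 1 ≤ d j := by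
      intro j h1 h2
      have hc := hcone' j h1 (by omega)
      have hm := ha_mono (p+3) (p+3+j) (by omega) (by omega)
      have hne := hnocone j h1 (by omega) (2*p+5) (le_refl _)
      omega
    set I2 := (Finset.Icc (p+3) (2*p+5)).filter (fun i => a i = a (2*p+5)) with hI2
    have hvals : ∀ i ∈ Finset.Icc (p+3) (2*p+5),
        (a i : ℤ) = ((a (2*p+5):ℤ) - 1) + (if a i = a (2*p+5) then (1:ℤ) else 0) := by
      intro i hi
      simp only [Finset.mem_Icc] at hi
      have h1 := ha_mono (p+3) i hi.1 (by omega)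
      have h2 := ha_mono i (2*p+5) hi.2 (by omega)
      by_cases h : a i = a (2*p+5)
      · rw [if_pos h, h]
        ring
      · rw [if_neg h]
        omega
    have hS2 : ∑ i ∈ Finset.Icc (p+3) (2*p+5), (a i : ℤ)
        = ((p:ℤ)+3) * ((a (2*p+5):ℤ) - 1) + (I2.card : ℤ) := by
      rw [Finset.sum_congr rfl hvals, Finset.sum_add_distrib, Finset.sum_const,
        Nat.card_Icc, Finset.sum_boole, show 2*p+5+1-(p+3) = p+3 by omega]
      push_cast
      ring
    -- first lower bound on the degree sum
    have hSD1 : ((p:ℤ)+1) * ((a (2*p+5):ℤ)+1) + 2*(a (2*p+5):ℤ)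
        ≤ ∑ j ∈ Finset.Icc 1 (p+2), (d j : ℤ) := by
      rw [hD]
      have h1 : ∀ j ∈ Finset.range (p+1), ((a (2*p+5):ℤ) + 1) ≤ (d (1+j) : ℤ) := by
        intro j hj
        simp only [Finset.mem_range] at hj
        have := hd_ge (1+j) (by omega) (by omega)
        push_cast
        omega
      have h2 := Finset.sum_le_sum h1
      rw [Finset.sum_const, Finset.card_range, nsmul_eq_mul] at h2
      push_cast at h2 ⊢
      linarith
    have hm2 : p + 2 ≤ I2.card := by
      have h : ((p:ℤ)+2) ≤ (I2.card : ℤ) := by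
        linarith [hindex, hA, hS2, hSD1]
      exact_mod_cast h
    have hIsub : I2 ⊆ Finset.range (2*p+5+1) := by
      intro i hi
      rw [hI2, Finset.mem_filter, Finset.mem_Icc] at hi
      simp only [Finset.mem_range]
      omega
    have hIdvd : ∀ i ∈ I2, a (2*p+5) ∣ a i := by
      intro i hi
      rw [hI2, Finset.mem_filter] at hi
      rw [hi.2]
    have hcard := hsmooth (a (2*p+5)) (by omega) I2 hIsub hIdvd
    have hFsub : (Finset.Icc 1 (p+2)).filter (fun j => a (2*p+5) ∣ d j) ⊆ Finset.Icc 1 (p+2) :=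
      Finset.filter_subset _ _
    have hFcard : (Finset.Icc 1 (p+2)).card
        ≤ ((Finset.Icc 1 (p+2)).filter (fun j => a (2*p+5) ∣ d j)).card := by
      rw [Nat.card_Icc]
      omega
    have hFeq : (Finset.Icc 1 (p+2)).filter (fun j => a (2*p+5) ∣ d j) = Finset.Icc 1 (p+2) :=
      Finset.eq_of_subset_of_card_le hFsub hFcard
    have hdvd : ∀ j, 1 ≤ j → j ≤ p+2 → a (2*p+5) ∣ d j := by
      intro j h1 h2
      have hj : j ∈ (Finset.Icc 1 (p+2)).filter (fun j => a (2*p+5) ∣ d j) := by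
        rw [hFeq, Finset.mem_Icc]
        omega
      exact (Finset.mem_filter.mp hj).2
    have hd_all : ∀ j, 1 ≤ j → j ≤ p+1 → 2 * a (2*p+5) ≤ d j := by
      intro j h1 h2
      obtain ⟨t, ht⟩ := hdvd j h1 (by omega)
      have hge := hd_ge j h1 h2
      rcases Nat.lt_or_ge t 2 with h | h
      · interval_cases t <;> simp at ht <;> omega
      · calc 2 * a (2*p+5) = a (2*p+5) * 2 := by ring
          _ ≤ a (2*p+5) * t := Nat.mul_le_mul_left _ h
          _ = d j := ht.symm
    have hSD2 : ((p:ℤ)+2) * (2*(a (2*p+5):ℤ)) ≤ ∑ j ∈ Finset.Icc 1 (p+2), (d j : ℤ) := by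
      rw [hD]
      have h1 : ∀ j ∈ Finset.range (p+1), (2*(a (2*p+5):ℤ)) ≤ (d (1+j) : ℤ) := by
        intro j hj
        simp only [Finset.mem_range] at hj
        have := hd_all (1+j) (by omega) (by omega)
        push_cast
        omega
      have h2 := Finset.sum_le_sum h1
      rw [Finset.sum_const, Finset.card_range, nsmul_eq_mul] at h2
      push_cast at h2 ⊢
      linarith
    have hmlt : I2.card < p + 3 := by
      have hss : I2 ⊂ Finset.Icc (p+3) (2*p+5) := by
        rw [Finset.ssubset_iff_of_subset (Finset.filter_subset _ _)]
        refine ⟨p+3, by rw [Finset.mem_Icc]; omega, ?_⟩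
        rw [Finset.mem_filter]
        rintro ⟨-, h⟩
        omega
      have h := Finset.card_lt_card hss
      rwa [Nat.card_Icc, show 2*p+5+1-(p+3) = p+3 by omega] at h
    have hx2 : (2:ℤ) ≤ (a (2*p+5):ℤ) := by exact_mod_cast haN
    have hmZ : (I2.card : ℤ) < (p:ℤ) + 3 := by exact_mod_cast hmlt
    nlinarith [hindex, hA, hS2, hSD2, hmZ, hx2,
      mul_nonneg (show (0:ℤ) ≤ (p:ℤ)+1 by positivity)
        (show (0:ℤ) ≤ (a (2*p+5):ℤ) - 2 by linarith)]
end
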